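/- arXiv:1612.05057 — 2 statements merged into one kernel-verified Lean document; each statement's English description precedes it below -/
import Mathlib

section
/- Assume M₁ᵏ − L·Id ∈ S₊(H), M₁ᵏ ⪰ M₁^{k+1}, M₂ᵏ ∈ S₊(G), and M₂ᵏ ⪰ M₂^{k+1} for all k ≥ 0, and let (xᵏ, zᵏ, yᵏ)_{k≥0} be the sequence generated by the variable-metric ADMM algorithm. Define the ergodic averages x̄ᵏ := (1/k)Σ_{i=1}^{k} xⁱ, ȳᵏ := (1/k)Σ_{i=1}^{k} yⁱ, z̄ᵏ := (1/k)Σ_{i=1}^{k} zⁱ for k ≥ 1. Then for all k ≥ 1 and all (x, z, y) ∈ H × G × G: l(x̄ᵏ, z̄ᵏ, y) − l(x, z, ȳᵏ) ≤ γ(x, z, y)/k, where γ(x, z, y) := (c/2)‖Ax − z⁰‖² + (1/2)(‖x − x⁰‖²_{M₁⁰} + ‖z − z⁰‖²_{M₂⁰}) + (1/(2c))‖y − y⁰‖². -/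
open scoped InnerProductSpace
open Filter

noncomputable section

section OpDefs

variable {E F : Type*} [NormedAddCommGroup E] [InnerProductSpace ℝ E]
  [NormedAddCommGroup F] [InnerProductSpace ℝ F]

/-- `U ∈ S₊(E)`: continuous linear, self-adjoint and positive semidefinite. -/
def IsSplusOp (U : E →L[ℝ] E) : Prop :=
  (∀ x y : E, ⟪U x, y⟫_ℝ = ⟪x, U y⟫_ℝ) ∧ ∀ x : E, 0 ≤ ⟪x, U x⟫_ℝ

/-- The squared seminorm `‖x‖²_U := ⟪x, U x⟫`. -/
def opSq (U : E →L[ℝ] E) (x : E) : ℝ := ⟪x, U x⟫_ℝ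

/-- Loewner order `U ⪰ V`. -/
def opLE (U V : E →L[ℝ] E) : Prop := ∀ x : E, ⟪x, V x⟫_ℝ ≤ ⟪x, U x⟫_ℝ

/-- `U ∈ P_α(E)`, i.e. `U ∈ S₊(E)` and `U ⪰ α·Id`. -/
def IsPalphaOp (α : ℝ) (U : E →L[ℝ] E) : Prop :=
  IsSplusOp U ∧ ∀ x : E, α * ‖x‖ ^ 2 ≤ ⟪x, U x⟫_ℝ

/-- Properness of an extended-real-valued function. -/
def ERealProper (f : E → EReal) : Prop := (∀ x, f x ≠ ⊥) ∧ ∃ x, f x ≠ ⊤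

/-- Convexity of an extended-real-valued function. -/
def ERealConvex (f : E → EReal) : Prop :=
  ∀ x y : E, ∀ a b : ℝ, 0 ≤ a → 0 ≤ b → a + b = 1 →
    f (a • x + b • y) ≤ (a : EReal) * f x + (b : EReal) * f y

/-- Weak convergence of a sequence in a Hilbert space, tested against inner products. -/
def WeakConv (u : ℕ → E) (p : E) : Prop :=
  ∀ w : E, Tendsto (fun k => ⟪u k, w⟫_ℝ) atTop (nhds ⟪p, w⟫_ℝ)

/-- The Lagrangian `l(x,z,y) = f(x) + g(z) + ⟪y, Ax - z⟫`. -/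
def Lagr (f : E → EReal) (g : F → EReal) (A : E →L[ℝ] F) (p : E) (q v : F) : EReal :=
  f p + g q + ((⟪v, A p - q⟫_ℝ : ℝ) : EReal)

/-- The Lagrangian with an additional smooth summand `h`:
`l(x,z,y) = f(x) + h(x) + g(z) + ⟪y, Ax - z⟫`. -/
def LagrH (f : E → EReal) (h : E → ℝ) (g : F → EReal) (A : E →L[ℝ] F)
    (p : E) (q v : F) : EReal :=
  f p + ((h p : ℝ) : EReal) + g q + ((⟪v, A p - q⟫_ℝ : ℝ) : EReal)

/-- `(xs, zs, ys)` is a saddle point of `l`. -/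
def IsSaddle (l : E → F → F → EReal) (xs : E) (zs ys : F) : Prop :=
  ∀ (p : E) (q v : F), l xs zs v ≤ l xs zs ys ∧ l xs zs ys ≤ l p q ys

/-- `xk1` is a minimizer of `u ↦ f u + (c/2)‖Au - zk + c⁻¹ yk‖² + (1/2)‖u - xk‖²_M`. -/
def IsXUpdate (f : E → EReal) (A : E →L[ℝ] F) (c : ℝ) (M : E →L[ℝ] E)
    (xk : E) (zk yk : F) (xk1 : E) : Prop :=
  ∀ u : E,
    f xk1 + (((c/2) * ‖A xk1 - zk + c⁻¹ • yk‖ ^ 2 + (1/2) * opSq M (xk1 - xk) : ℝ) : EReal) ≤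
    f u + (((c/2) * ‖A u - zk + c⁻¹ • yk‖ ^ 2 + (1/2) * opSq M (u - xk) : ℝ) : EReal)

/-- `xk1` is a minimizer of the `x`-subproblem with linearized smooth part:
`u ↦ f u + ⟪u - xk, ∇h(xk)⟫ + (c/2)‖Au - zk + c⁻¹ yk‖² + (1/2)‖u - xk‖²_M`. -/
def IsXUpdateGrad (f : E → EReal) (h' : E → E) (A : E →L[ℝ] F) (c : ℝ) (M : E →L[ℝ] E)
    (xk : E) (zk yk : F) (xk1 : E) : Prop :=
  ∀ u : E,
    f xk1 + ((⟪xk1 - xk, h' xk⟫_ℝ + (c/2) * ‖A xk1 - zk + c⁻¹ • yk‖ ^ 2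
        + (1/2) * opSq M (xk1 - xk) : ℝ) : EReal) ≤
    f u + ((⟪u - xk, h' xk⟫_ℝ + (c/2) * ‖A u - zk + c⁻¹ • yk‖ ^ 2
        + (1/2) * opSq M (u - xk) : ℝ) : EReal)

/-- `zk1` is a minimizer of `w ↦ g w + (c/2)‖Ax - w + c⁻¹ yk‖² + (1/2)‖w - zk‖²_M`. -/
def IsZUpdate (g : F → EReal) (c : ℝ) (M : F →L[ℝ] F)
    (Ax zk yk zk1 : F) : Prop :=
  ∀ w : F,
    g zk1 + (((c/2) * ‖Ax - zk1 + c⁻¹ • yk‖ ^ 2 + (1/2) * opSq M (zk1 - zk) : ℝ) : EReal) ≤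
    g w + (((c/2) * ‖Ax - w + c⁻¹ • yk‖ ^ 2 + (1/2) * opSq M (w - zk) : ℝ) : EReal)

end OpDefs

/-! Lyapunov argument. Put
`E_k(p,q,v) = c/2 ‖Ap - z_k‖² + ½ (‖p - x_k‖²_{M₁ᵏ} + ‖q - z_k‖²_{M₂ᵏ}) + 1/(2c) ‖v - y_k‖²`.
The first-order conditions of the two convex subproblems, the descent lemma and the gradient
inequality for `h`, and `M₁ᵏ ⪰ L·Id` give
`l(x_{k+1}, z_{k+1}, v) - l(p, q, y_{k+1}) ≤ E_k - E_{k+1}` with the metrics of step `k` in both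
energies; as the metrics decrease, the energies telescope. Since `(x, z) ↦ l(x, z, v)` is convex
and `y ↦ l(p, q, y)` is affine, Jensen's inequality carries the averaged bound to the ergodic
means. -/

open scoped NNReal
open Set Topology

lemma hasDerivAt_add_smul {E : Type*} [NormedAddCommGroup E] [NormedSpace ℝ E] (x d : E) (t : ℝ) :
    HasDerivAt (fun s : ℝ => x + s • d) d t := by
  simpa using ((hasDerivAt_id t).smul_const d).const_add x

section Quadratic

variable {E : Type*} [NormedAddCommGroup E] [InnerProductSpace ℝ E] {M : E →L[ℝ] E}

lemma IsSplusOp.opSq_sub_eq (hM : IsSplusOp M) (a b c : E) :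
    opSq M (a - c) = opSq M (a - b) + opSq M (b - c) + 2 * ⟪M (b - c), a - b⟫_ℝ := by
  have hsplit : a - c = (a - b) + (b - c) := by abel
  simp only [opSq, hsplit, map_add, inner_add_left, inner_add_right]
  rw [← hM.1 (b - c), real_inner_comm (a - b) (M (b - c))]
  ring

lemma HasDerivAt.opSq (hM : IsSplusOp M) {v : ℝ → E} {v' : E} {t : ℝ}
    (hv : HasDerivAt v v' t) :
    HasDerivAt (fun s => opSq M (v s)) (2 * ⟪M (v t), v'⟫_ℝ) t := by
  have := hv.inner ℝ ((M.hasFDerivAt).comp_hasDerivAt t hv)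
  refine this.congr_deriv ?_
  simp only [Function.comp_apply]
  rw [← hM.1, real_inner_comm v']
  ring

lemma IsSplusOp.toNNReal_mul_norm_sq_le {L : ℝ} (hM : IsSplusOp M)
    (hML : IsSplusOp (M - L • ContinuousLinearMap.id ℝ E)) (u : E) :
    (L.toNNReal : ℝ) * ‖u‖ ^ 2 ≤ opSq M u := by
  have hL := hML.2 u
  simp only [sub_apply, smul_apply, ContinuousLinearMap.id_apply, inner_sub_right,
    real_inner_smul_right, real_inner_self_eq_norm_sq] at hL
  rw [Real.coe_toNNReal']
  rcases max_cases L 0 with ⟨hmax, _⟩ | ⟨hmax, _⟩ <;> rw [hmax]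
  · unfold opSq; linarith
  · rw [zero_mul]; exact hM.2 u

end Quadratic

section Smooth

variable {E : Type*} [NormedAddCommGroup E] [InnerProductSpace ℝ E] [CompleteSpace E]
  {h : E → ℝ}

lemma HasGradientAt.hasDerivAt_comp_add_smul {g x d : E} {t : ℝ}
    (hg : HasGradientAt h g (x + t • d)) :
    HasDerivAt (fun s : ℝ => h (x + s • d)) ⟪g, d⟫_ℝ t := by
  simpa [Function.comp_def] using hg.hasFDerivAt.comp_hasDerivAt t (hasDerivAt_add_smul x d t)

lemma ConvexOn.add_inner_le_of_hasGradientAt (hh : ConvexOn ℝ univ h) {g x : E}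
    (hg : HasGradientAt h g x) (u : E) : h x + ⟪g, u - x⟫_ℝ ≤ h u := by
  have hline : ConvexOn ℝ univ (fun t : ℝ => h (x + t • (u - x))) := by
    simpa [Function.comp_def, AffineMap.lineMap_apply, add_comm]
      using hh.comp_affineMap (AffineMap.lineMap x u)
  have hder := (show HasGradientAt h g (x + (0 : ℝ) • (u - x)) by simpa using hg)
    |>.hasDerivAt_comp_add_smul
  have := hline.le_slope_of_hasDerivAt (mem_univ 0) (mem_univ 1) one_pos hder
  simp only [slope_def_field, one_smul, add_sub_cancel, zero_smul, add_zero, sub_zero,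
    div_one] at this
  linarith

lemma le_add_inner_add_norm_sq_of_lipschitzWith {h' : E → E}
    (hgrad : ∀ x, HasGradientAt h (h' x) x) {K : ℝ≥0} (hlip : LipschitzWith K h') (x d : E) :
    h (x + d) ≤ h x + ⟪h' x, d⟫_ℝ + K / 2 * ‖d‖ ^ 2 := by
  set ψ : ℝ → ℝ := fun t => h (x + t • d) - t * ⟪h' x, d⟫_ℝ - K / 2 * t ^ 2 * ‖d‖ ^ 2
  have hψ : ∀ t, HasDerivAt ψ (⟪h' (x + t • d), d⟫_ℝ - ⟪h' x, d⟫_ℝ - K * t * ‖d‖ ^ 2) t := by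
    intro t
    have := (((hgrad (x + t • d)).hasDerivAt_comp_add_smul).sub
      ((hasDerivAt_id t).mul_const ⟪h' x, d⟫_ℝ)).sub
      (((hasDerivAt_pow 2 t).const_mul (K / 2 : ℝ)).mul_const (‖d‖ ^ 2))
    exact this.congr_deriv (by simp only [Nat.cast_ofNat, one_mul]; ring)
  have hanti : AntitoneOn ψ (Ici 0) := by
    refine antitoneOn_of_hasDerivWithinAt_nonpos (convex_Ici 0)
      (fun t _ => (hψ t).continuousAt.continuousWithinAt) (fun t _ => (hψ t).hasDerivWithinAt) ?_
    intro t ht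
    rw [interior_Ici, mem_Ioi] at ht
    have hlipt : ‖h' (x + t • d) - h' x‖ ≤ K * (t * ‖d‖) := by
      simpa [dist_eq_norm, norm_smul, abs_of_pos ht] using hlip.dist_le_mul (x + t • d) x
    calc ⟪h' (x + t • d), d⟫_ℝ - ⟪h' x, d⟫_ℝ - K * t * ‖d‖ ^ 2
        = ⟪h' (x + t • d) - h' x, d⟫_ℝ - K * t * ‖d‖ ^ 2 := by rw [inner_sub_left]
      _ ≤ ‖h' (x + t • d) - h' x‖ * ‖d‖ - K * t * ‖d‖ ^ 2 := by
        gcongr; exact real_inner_le_norm _ _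
      _ ≤ K * (t * ‖d‖) * ‖d‖ - K * t * ‖d‖ ^ 2 := by gcongr
      _ = 0 := by ring
  have hψ0 : ψ 0 = h x := by simp [ψ]
  have hψ1 : ψ 1 = h (x + d) - ⟪h' x, d⟫_ℝ - K / 2 * ‖d‖ ^ 2 := by simp [ψ]
  linarith [hanti self_mem_Ici (show (0 : ℝ) ≤ 1 from zero_le_one) zero_le_one]

lemma ConvexOn.le_add_inner_sub_add_norm_sq_of_lipschitzWith (hh : ConvexOn ℝ univ h)
    {h' : E → E} (hgrad : ∀ x, HasGradientAt h (h' x) x) {K : ℝ≥0} (hlip : LipschitzWith K h')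
    (x u p : E) : h u ≤ h p + ⟪h' x, u - p⟫_ℝ + K / 2 * ‖u - x‖ ^ 2 := by
  have hdescent := le_add_inner_add_norm_sq_of_lipschitzWith hgrad hlip x (u - x)
  have htangent := hh.add_inner_le_of_hasGradientAt (hgrad x) p
  have hsplit : ⟪h' x, u - x⟫_ℝ = ⟪h' x, u - p⟫_ℝ + ⟪h' x, p - x⟫_ℝ := by
    rw [← inner_add_right, sub_add_sub_cancel]
  rw [add_sub_cancel] at hdescent
  linarith

end Smooth

lemma EReal.ne_top_of_add_coe_le_add_coe {X Y : EReal} {a b : ℝ} (hle : X + a ≤ Y + b)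
    (hY : Y ≠ ⊤) : X ≠ ⊤ := by
  rintro rfl
  rw [EReal.top_add_of_ne_bot (EReal.coe_ne_bot a), top_le_iff] at hle
  exact EReal.add_ne_top hY (EReal.coe_ne_top b) hle

section Variational

variable {E : Type*} [NormedAddCommGroup E] [InnerProductSpace ℝ E]

lemma ERealConvex.le_add_of_isMin_add {f : E → EReal} (hf : ERealConvex f) {φ : E → ℝ}
    {xs p : E} {a b s : ℝ} (hmin : ∀ u, f xs + (φ xs : EReal) ≤ f u + (φ u : EReal))
    (hxs : f xs = a) (hp : f p = b) (hφ : HasDerivAt (fun t : ℝ => φ (xs + t • (p - xs))) s 0) :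
    a ≤ b + s := by
  have hslope : ∀ t ∈ Ioc (0 : ℝ) 1, a - b ≤ slope (fun t : ℝ => φ (xs + t • (p - xs))) 0 t := by
    rintro t ⟨ht0, ht1⟩
    have hconv : f (xs + t • (p - xs)) ≤ (((1 - t) * a + t * b : ℝ) : EReal) := by
      have hseg : xs + t • (p - xs) = (1 - t) • xs + t • p := by module
      rw [hseg, EReal.coe_add, EReal.coe_mul, EReal.coe_mul, ← hxs, ← hp]
      exact hf xs p (1 - t) t (by linarith) ht0.le (by ring)
    have := (hmin (xs + t • (p - xs))).trans (add_le_add_left hconv _)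
    rw [hxs, ← EReal.coe_add, ← EReal.coe_add, EReal.coe_le_coe_iff] at this
    rw [slope_def_field, zero_smul, add_zero, sub_zero, le_div_iff₀ ht0]
    nlinarith
  have hlim := hasDerivAt_iff_tendsto_slope.1 hφ |>.mono_left (nhdsGT_le_nhdsNE 0)
  have hev : ∀ᶠ t in 𝓝[>] 0, a - b ≤ slope (fun t : ℝ => φ (xs + t • (p - xs))) 0 t := by
    filter_upwards [Ioc_mem_nhdsGT zero_lt_one] with t ht using hslope t ht
  linarith [ge_of_tendsto hlim hev]

end Variational

section Updates

variable {E F : Type*} [NormedAddCommGroup E] [InnerProductSpace ℝ E]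
  [NormedAddCommGroup F] [InnerProductSpace ℝ F]

lemma IsXUpdateGrad.le_add {f : E → EReal} {h' : E → E} {A : E →L[ℝ] F} {c : ℝ}
    {M : E →L[ℝ] E} {xk x1 p : E} {zk yk : F} {a b : ℝ} (hfc : ERealConvex f)
    (hM : IsSplusOp M) (hx : IsXUpdateGrad f h' A c M xk zk yk x1) (hx1 : f x1 = a)
    (hp : f p = b) :
    a ≤ b + (⟪p - x1, h' xk⟫_ℝ + c * ⟪A x1 - zk + c⁻¹ • yk, A (p - x1)⟫_ℝ
      + ⟪M (x1 - xk), p - x1⟫_ℝ) := by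
  refine hfc.le_add_of_isMin_add (φ := fun u => ⟪u - xk, h' xk⟫_ℝ
    + c / 2 * ‖A u - zk + c⁻¹ • yk‖ ^ 2 + 1 / 2 * opSq M (u - xk)) hx hx1 hp ?_
  have hℓ := hasDerivAt_add_smul x1 (p - x1) 0
  have := (((hℓ.sub_const xk).inner ℝ (hasDerivAt_const 0 (h' xk))).add
    (((((A.hasFDerivAt.comp_hasDerivAt 0 hℓ).sub_const zk).add_const (c⁻¹ • yk)).norm_sq).const_mul
      (c / 2))).add (((hℓ.sub_const xk).opSq hM).const_mul (1 / 2))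
  refine this.congr_deriv ?_
  simp only [zero_smul, add_zero, Function.comp_apply, inner_zero_right, zero_add]
  ring

lemma IsZUpdate.le_add {g : F → EReal} {c : ℝ} {N : F →L[ℝ] F} {ax zk yk z1 q : F} {a b : ℝ}
    (hgc : ERealConvex g) (hN : IsSplusOp N) (hz : IsZUpdate g c N ax zk yk z1) (hz1 : g z1 = a)
    (hq : g q = b) :
    a ≤ b + (-(c * ⟪ax - z1 + c⁻¹ • yk, q - z1⟫_ℝ) + ⟪N (z1 - zk), q - z1⟫_ℝ) := by
  refine hgc.le_add_of_isMin_add (φ := fun w => c / 2 * ‖ax - w + c⁻¹ • yk‖ ^ 2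
    + 1 / 2 * opSq N (w - zk)) hz hz1 hq ?_
  have hℓ := hasDerivAt_add_smul z1 (q - z1) 0
  have := (((((hℓ.const_sub ax).add_const (c⁻¹ • yk)).norm_sq).const_mul (c / 2))).add
    (((hℓ.sub_const zk).opSq hN).const_mul (1 / 2))
  refine this.congr_deriv ?_
  simp only [zero_smul, add_zero, inner_neg_right]
  ring

end Updates

section Multiplier

variable {F : Type*} [NormedAddCommGroup F] [InnerProductSpace ℝ F]

lemma multiplier_step_le {c : ℝ} (hc : 0 < c) {ap ax zk z1 yk y1 q v : F}
    (hy : y1 = yk + c • (ax - z1)) :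
    c * ⟪ax - zk + c⁻¹ • yk, ap - ax⟫_ℝ - c * ⟪ax - z1 + c⁻¹ • yk, q - z1⟫_ℝ
        + ⟪v, ax - z1⟫_ℝ - ⟪y1, ap - q⟫_ℝ
      ≤ c / 2 * (‖ap - zk‖ ^ 2 - ‖ap - z1‖ ^ 2) + 1 / (2 * c) * (‖v - yk‖ ^ 2 - ‖v - y1‖ ^ 2) := by
  have hx : c • (ax - zk + c⁻¹ • yk) = y1 + c • (z1 - zk) := by
    rw [hy]; match_scalars <;> field_simp; ring
  have hz : c • (ax - z1 + c⁻¹ • yk) = y1 := by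
    rw [hy]; match_scalars <;> field_simp
  have hlhs : c * ⟪ax - zk + c⁻¹ • yk, ap - ax⟫_ℝ - c * ⟪ax - z1 + c⁻¹ • yk, q - z1⟫_ℝ
        + ⟪v, ax - z1⟫_ℝ - ⟪y1, ap - q⟫_ℝ
      = ⟪v - y1, ax - z1⟫_ℝ + c * ⟪z1 - zk, ap - z1⟫_ℝ - c * ⟪z1 - zk, ax - z1⟫_ℝ := by
    rw [← real_inner_smul_left, ← real_inner_smul_left, hx, hz]
    simp only [inner_add_left, inner_sub_left, inner_sub_right, real_inner_smul_left]
    ring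
  have hzk : ‖ap - zk‖ ^ 2 = ‖ap - z1‖ ^ 2 + 2 * ⟪ap - z1, z1 - zk⟫_ℝ + ‖z1 - zk‖ ^ 2 := by
    rw [← norm_add_sq_real]; congr 2; abel
  have hyk : ‖v - yk‖ ^ 2 = ‖v - y1‖ ^ 2 + 2 * c * ⟪v - y1, ax - z1⟫_ℝ + c ^ 2 * ‖ax - z1‖ ^ 2 := by
    have : v - yk = (v - y1) + c • (ax - z1) := by rw [hy]; abel
    rw [this, norm_add_sq_real, real_inner_smul_right, norm_smul, Real.norm_eq_abs, mul_pow,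
      sq_abs]
    ring
  -- the slack in the inequality is `c / 2 * ‖(z1 - zk) + (ax - z1)‖ ^ 2`
  have hwr : 0 ≤ ‖(z1 - zk) + (ax - z1)‖ ^ 2 := sq_nonneg _
  rw [norm_add_sq_real] at hwr
  rw [hlhs, hzk, hyk, real_inner_comm (ap - z1)]
  field_simp
  nlinarith [hc]

end Multiplier

section Step

variable {E F : Type*} [NormedAddCommGroup E] [InnerProductSpace ℝ E]
  [NormedAddCommGroup F] [InnerProductSpace ℝ F]

def admmEnergy (A : E →L[ℝ] F) (c : ℝ) (M : E →L[ℝ] E) (N : F →L[ℝ] F) (x : E) (z y : F)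
    (p : E) (q v : F) : ℝ :=
  (c/2) * ‖A p - z‖ ^ 2 + (1/2) * (opSq M (p - x) + opSq N (q - z)) + (1/(2*c)) * ‖v - y‖ ^ 2

def lagrHReal (f : E → EReal) (h : E → ℝ) (g : F → EReal) (A : E →L[ℝ] F) (p : E) (q v : F) :
    ℝ :=
  (f p).toReal + h p + (g q).toReal + ⟪v, A p - q⟫_ℝ

lemma admmEnergy_nonneg {A : E →L[ℝ] F} {c : ℝ} (hc : 0 < c) {M : E →L[ℝ] E} {N : F →L[ℝ] F}
    (hM : IsSplusOp M) (hN : IsSplusOp N) (x : E) (z y : F) (p : E) (q v : F) :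
    0 ≤ admmEnergy A c M N x z y p q v := by
  have := hM.2 (p - x)
  have := hN.2 (q - z)
  unfold admmEnergy opSq
  positivity

lemma admmEnergy_anti {A : E →L[ℝ] F} {c : ℝ} {M M' : E →L[ℝ] E} {N N' : F →L[ℝ] F}
    (hM : opLE M M') (hN : opLE N N') (x : E) (z y : F) (p : E) (q v : F) :
    admmEnergy A c M' N' x z y p q v ≤ admmEnergy A c M N x z y p q v := by
  have := hM (p - x)
  have := hN (q - z)
  unfold admmEnergy opSq
  linarith

variable [CompleteSpace E]

lemma lagrHReal_sub_le_admmEnergy_sub {f : E → EReal} {g : F → EReal} {h : E → ℝ} {h' : E → E}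
    {K : ℝ≥0} {A : E →L[ℝ] F} {c : ℝ} {M : E →L[ℝ] E} {N : F →L[ℝ] F} {xk x1 p : E} {zk z1 yk y1 q v : F}
    (hfc : ERealConvex f) (hgc : ERealConvex g) (hfb : ∀ u, f u ≠ ⊥) (hgb : ∀ w, g w ≠ ⊥)
    (hh : ConvexOn ℝ univ h) (hgrad : ∀ u, HasGradientAt h (h' u) u) (hlip : LipschitzWith K h')
    (hc : 0 < c) (hM : IsSplusOp M) (hMK : ∀ u, K * ‖u‖ ^ 2 ≤ opSq M u) (hN : IsSplusOp N)
    (hx : IsXUpdateGrad f h' A c M xk zk yk x1) (hz : IsZUpdate g c N (A x1) zk yk z1)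
    (hy : y1 = yk + c • (A x1 - z1)) (hfp : f p ≠ ⊤) (hgq : g q ≠ ⊤) :
    lagrHReal f h g A x1 z1 v - lagrHReal f h g A p q y1
      ≤ admmEnergy A c M N xk zk yk p q v - admmEnergy A c M N x1 z1 y1 p q v := by
  have hfx1 := EReal.ne_top_of_add_coe_le_add_coe (hx p) hfp
  have hgz1 := EReal.ne_top_of_add_coe_le_add_coe (hz q) hgq
  have hX := hx.le_add hfc hM (EReal.coe_toReal hfx1 (hfb x1)).symm
    (EReal.coe_toReal hfp (hfb p)).symm
  have hZ := hz.le_add hgc hN (EReal.coe_toReal hgz1 (hgb z1)).symm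
    (EReal.coe_toReal hgq (hgb q)).symm
  have hH := hh.le_add_inner_sub_add_norm_sq_of_lipschitzWith hgrad hlip xk x1 p
  have hMx := hM.opSq_sub_eq p x1 xk
  have hNz := hN.opSq_sub_eq q z1 zk
  have hmult := multiplier_step_le (ap := A p) (zk := zk) (q := q) (v := v) hc hy
  have hMK' := hMK (x1 - xk)
  have hNpos : 0 ≤ opSq N (z1 - zk) := hN.2 _
  have hgrad_term : ⟪p - x1, h' xk⟫_ℝ = -⟪h' xk, x1 - p⟫_ℝ := by
    rw [real_inner_comm, ← inner_neg_right, neg_sub]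
  rw [map_sub] at hX
  unfold lagrHReal admmEnergy
  linarith

end Step

section Averages

open Finset

variable {E F : Type*} [NormedAddCommGroup E] [InnerProductSpace ℝ E]
  [NormedAddCommGroup F] [InnerProductSpace ℝ F]

lemma ConvexOn.map_range_average_le {s : Set E} {φ : E → ℝ} (hφ : ConvexOn ℝ s φ) {k : ℕ}
    (hk : k ≠ 0) {u : ℕ → E} (hu : ∀ i < k, u i ∈ s) :
    (k : ℝ)⁻¹ • ∑ i ∈ range k, u i ∈ s ∧
      φ ((k : ℝ)⁻¹ • ∑ i ∈ range k, u i) ≤ (k : ℝ)⁻¹ * ∑ i ∈ range k, φ (u i) := by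
  have hw : ∑ _i ∈ range k, (k : ℝ)⁻¹ = 1 := by simp [hk]
  have hu' : ∀ i ∈ range k, u i ∈ s := fun i hi => hu i (mem_range.1 hi)
  rw [smul_sum, mul_sum]
  exact ⟨hφ.1.sum_mem (fun _ _ => by positivity) hw hu',
    hφ.map_sum_le (fun _ _ => by positivity) hw hu'⟩

lemma ERealConvex.convexOn_toReal {f : E → EReal} (hf : ERealConvex f) (hfb : ∀ x, f x ≠ ⊥) :
    ConvexOn ℝ {x | f x ≠ ⊤} (fun x => (f x).toReal) := by
  have hcomb : ∀ x ∈ {x | f x ≠ ⊤}, ∀ y ∈ {x | f x ≠ ⊤}, ∀ a b : ℝ, 0 ≤ a → 0 ≤ b → a + b = 1 →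
      f (a • x + b • y) ≤ ((a * (f x).toReal + b * (f y).toReal : ℝ) : EReal) := by
    intro x hx y hy a b ha hb hab
    rw [EReal.coe_add, EReal.coe_mul, EReal.coe_mul, EReal.coe_toReal hx (hfb x),
      EReal.coe_toReal hy (hfb y)]
    exact hf x y a b ha hb hab
  refine ⟨fun x hx y hy a b ha hb hab => ?_, fun x hx y hy a b ha hb hab => ?_⟩
  · exact ((hcomb x hx y hy a b ha hb hab).trans_lt (EReal.coe_lt_top _)).ne
  · have := EReal.toReal_le_toReal (hcomb x hx y hy a b ha hb hab) (hfb _) (EReal.coe_ne_top _)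
    rwa [EReal.toReal_coe] at this

lemma ERealConvex.map_average_le {f : E → EReal} (hf : ERealConvex f) (hfb : ∀ x, f x ≠ ⊥)
    {k : ℕ} (hk : k ≠ 0) {u : ℕ → E} (hu : ∀ i < k, f (u i) ≠ ⊤) :
    f ((k : ℝ)⁻¹ • ∑ i ∈ range k, u i) ≤
      (((k : ℝ)⁻¹ * ∑ i ∈ range k, (f (u i)).toReal : ℝ) : EReal) := by
  obtain ⟨hmem, hle⟩ := (hf.convexOn_toReal hfb).map_range_average_le hk hu
  rw [← EReal.coe_toReal hmem (hfb _)]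
  exact EReal.coe_le_coe_iff.2 hle

lemma LagrH_eq_coe_lagrHReal {f : E → EReal} {h : E → ℝ} {g : F → EReal} {A : E →L[ℝ] F}
    {p : E} {q : F} (hfp : f p ≠ ⊤) (hfpb : f p ≠ ⊥) (hgq : g q ≠ ⊤) (hgqb : g q ≠ ⊥) (v : F) :
    LagrH f h g A p q v = lagrHReal f h g A p q v := by
  rw [LagrH, lagrHReal, EReal.coe_add, EReal.coe_add, EReal.coe_add,
    EReal.coe_toReal hfp hfpb, EReal.coe_toReal hgq hgqb]

lemma LagrH_average_le {f : E → EReal} {h : E → ℝ} {g : F → EReal} (A : E →L[ℝ] F)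
    (hfc : ERealConvex f) (hfb : ∀ x, f x ≠ ⊥) (hh : ConvexOn ℝ univ h)
    (hgc : ERealConvex g) (hgb : ∀ z, g z ≠ ⊥) {k : ℕ} (hk : k ≠ 0) {u : ℕ → E} {w : ℕ → F}
    (hu : ∀ i < k, f (u i) ≠ ⊤) (hw : ∀ i < k, g (w i) ≠ ⊤) (v : F) :
    LagrH f h g A ((k : ℝ)⁻¹ • ∑ i ∈ range k, u i) ((k : ℝ)⁻¹ • ∑ i ∈ range k, w i) v ≤
      (((k : ℝ)⁻¹ * ∑ i ∈ range k, lagrHReal f h g A (u i) (w i) v : ℝ) : EReal) := by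
  have hinner : ⟪v, A ((k : ℝ)⁻¹ • ∑ i ∈ range k, u i) - (k : ℝ)⁻¹ • ∑ i ∈ range k, w i⟫_ℝ
      = (k : ℝ)⁻¹ * ∑ i ∈ range k, ⟪v, A (u i) - w i⟫_ℝ := by
    rw [map_smul, map_sum, ← smul_sub, ← sum_sub_distrib, real_inner_smul_right, inner_sum]
  have hsplit : (k : ℝ)⁻¹ * ∑ i ∈ range k, lagrHReal f h g A (u i) (w i) v
      = (k : ℝ)⁻¹ * ∑ i ∈ range k, (f (u i)).toReal + (k : ℝ)⁻¹ * ∑ i ∈ range k, h (u i)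
        + (k : ℝ)⁻¹ * ∑ i ∈ range k, (g (w i)).toReal
        + (k : ℝ)⁻¹ * ∑ i ∈ range k, ⟪v, A (u i) - w i⟫_ℝ := by
    simp only [lagrHReal, sum_add_distrib, mul_add]
  rw [LagrH, hinner, hsplit, EReal.coe_add, EReal.coe_add, EReal.coe_add]
  gcongr
  · exact hfc.map_average_le hfb hk hu
  · exact (hh.map_range_average_le (u := u) hk fun _ _ => Set.mem_univ _).2
  · exact hgc.map_average_le hgb hk hw

lemma LagrH_eq_top {f : E → EReal} {h : E → ℝ} {g : F → EReal}
    (A : E →L[ℝ] F) (hfb : ∀ x, f x ≠ ⊥) (hgb : ∀ z, g z ≠ ⊥) {p : E} {q : F}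
    (htop : f p = ⊤ ∨ g q = ⊤) (v : F) : LagrH f h g A p q v = ⊤ := by
  have hfh : f p + (h p : EReal) ≠ ⊥ := EReal.add_ne_bot_iff.2 ⟨hfb p, EReal.coe_ne_bot _⟩
  rcases htop with hf | hg
  · rw [LagrH, hf, EReal.top_add_of_ne_bot (EReal.coe_ne_bot _), EReal.top_add_of_ne_bot (hgb q),
      EReal.top_add_of_ne_bot (EReal.coe_ne_bot _)]
  · rw [LagrH, hg, EReal.add_top_of_ne_bot hfh, EReal.top_add_of_ne_bot (EReal.coe_ne_bot _)]

lemma LagrH_average_sub_le {f : E → EReal} {h : E → ℝ} {g : F → EReal} (A : E →L[ℝ] F)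
    (hfc : ERealConvex f) (hfb : ∀ x, f x ≠ ⊥) (hh : ConvexOn ℝ univ h)
    (hgc : ERealConvex g) (hgb : ∀ z, g z ≠ ⊥) {k : ℕ} (hk : k ≠ 0) {u : ℕ → E} {w y : ℕ → F}
    (hu : ∀ i < k, f (u i) ≠ ⊤) (hw : ∀ i < k, g (w i) ≠ ⊤) {p : E} {q : F} (hfp : f p ≠ ⊤)
    (hgq : g q ≠ ⊤) (v : F) :
    LagrH f h g A ((k : ℝ)⁻¹ • ∑ i ∈ range k, u i) ((k : ℝ)⁻¹ • ∑ i ∈ range k, w i) v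
        - LagrH f h g A p q ((k : ℝ)⁻¹ • ∑ i ∈ range k, y i) ≤
      (((k : ℝ)⁻¹ * ∑ i ∈ range k,
        (lagrHReal f h g A (u i) (w i) v - lagrHReal f h g A p q (y i)) : ℝ) : EReal) := by
  have hright : LagrH f h g A p q ((k : ℝ)⁻¹ • ∑ i ∈ range k, y i) =
      (((k : ℝ)⁻¹ * ∑ i ∈ range k, lagrHReal f h g A p q (y i) : ℝ) : EReal) := by
    rw [LagrH_eq_coe_lagrHReal hfp (hfb p) hgq (hgb q), EReal.coe_eq_coe_iff]
    simp only [lagrHReal, sum_add_distrib, sum_const, card_range, nsmul_eq_mul, mul_add,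
      real_inner_smul_left, sum_inner]
    field_simp
  rw [hright, sum_sub_distrib, mul_sub, EReal.coe_sub]
  exact EReal.sub_le_sub (LagrH_average_le A hfc hfb hh hgc hgb hk hu hw v) le_rfl

end Averages

lemma sum_range_le_of_le_sub_succ {a e : ℕ → ℝ} (h : ∀ i, a i ≤ e i - e (i + 1)) {k : ℕ}
    (he : 0 ≤ e k) : ∑ i ∈ Finset.range k, a i ≤ e 0 :=
  calc ∑ i ∈ Finset.range k, a i ≤ ∑ i ∈ Finset.range k, (e i - e (i + 1)) :=
        Finset.sum_le_sum fun i _ => h i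
    _ = e 0 - e k := Finset.sum_range_sub' e k
    _ ≤ e 0 := by linarith

theorem stmt9_general {H G : Type*}
    [NormedAddCommGroup H] [InnerProductSpace ℝ H] [CompleteSpace H]
    [NormedAddCommGroup G] [InnerProductSpace ℝ G]
    (f : H → EReal) (g : G → EReal)
    (hfp : ERealProper f) (hfc : ERealConvex f)
    (hgp : ERealProper g) (hgc : ERealConvex g)
    (h : H → ℝ) (h' : H → H) (L : ℝ)
    (hconv : ConvexOn ℝ Set.univ h)
    (hgrad : ∀ p : H, HasGradientAt h (h' p) p)
    (hlip : LipschitzWith (Real.toNNReal L) h')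
    (A : H →L[ℝ] G) (c : ℝ) (hc : 0 < c)
    (M₁ : ℕ → (H →L[ℝ] H)) (M₂ : ℕ → (G →L[ℝ] G))
    (hM₁ : ∀ k : ℕ, IsSplusOp (M₁ k)) (hM₂ : ∀ k : ℕ, IsSplusOp (M₂ k))
    (hM₁L : ∀ k : ℕ, IsSplusOp (M₁ k - L • ContinuousLinearMap.id ℝ H))
    (hM₁mono : ∀ k : ℕ, opLE (M₁ k) (M₁ (k+1)))
    (hM₂mono : ∀ k : ℕ, opLE (M₂ k) (M₂ (k+1)))
    (x : ℕ → H) (z y : ℕ → G)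
    (hx : ∀ k : ℕ, IsXUpdateGrad f h' A c (M₁ k) (x k) (z k) (y k) (x (k+1)))
    (hz : ∀ k : ℕ, IsZUpdate g c (M₂ k) (A (x (k+1))) (z k) (y k) (z (k+1)))
    (hy : ∀ k : ℕ, y (k+1) = y k + c • (A (x (k+1)) - z (k+1))) :
    ∀ k : ℕ, 1 ≤ k → ∀ (p : H) (q v : G),
      LagrH f h g A ((k : ℝ)⁻¹ • ∑ i ∈ Finset.range k, x (i+1))
          ((k : ℝ)⁻¹ • ∑ i ∈ Finset.range k, z (i+1)) v
        - LagrH f h g A p q ((k : ℝ)⁻¹ • ∑ i ∈ Finset.range k, y (i+1)) ≤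
      ((((c/2) * ‖A p - z 0‖ ^ 2
          + (1/2) * (opSq (M₁ 0) (p - x 0) + opSq (M₂ 0) (q - z 0))
          + (1/(2*c)) * ‖v - y 0‖ ^ 2) / (k : ℝ) : ℝ) : EReal) := by
  intro k hk p q v
  have hk0 : k ≠ 0 := Nat.one_le_iff_ne_zero.mp hk
  by_cases htop : f p = ⊤ ∨ g q = ⊤
  · rw [LagrH_eq_top A hfp.1 hgp.1 htop, EReal.sub_top]
    exact bot_le
  obtain ⟨hfp_top, hgq_top⟩ := not_or.mp htop
  set e : ℕ → ℝ := fun i => admmEnergy A c (M₁ i) (M₂ i) (x i) (z i) (y i) p q v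
  set gap : ℕ → ℝ := fun i =>
    lagrHReal f h g A (x (i+1)) (z (i+1)) v - lagrHReal f h g A p q (y (i+1))
  have hstep : ∀ i, gap i ≤ e i - e (i+1) := fun i =>
    (lagrHReal_sub_le_admmEnergy_sub hfc hgc hfp.1 hgp.1 hconv hgrad hlip hc (hM₁ i)
      ((hM₁ i).toNNReal_mul_norm_sq_le (hM₁L i)) (hM₂ i) (hx i) (hz i) (hy i) hfp_top hgq_top).trans
      (sub_le_sub_left (admmEnergy_anti (hM₁mono i) (hM₂mono i) ..) _)
  have hsum : ∑ i ∈ Finset.range k, gap i ≤ e 0 :=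
    sum_range_le_of_le_sub_succ hstep (admmEnergy_nonneg hc (hM₁ k) (hM₂ k) ..)
  have hfx : ∀ i < k, f (x (i+1)) ≠ ⊤ := fun i _ =>
    EReal.ne_top_of_add_coe_le_add_coe (hx i p) hfp_top
  have hgz : ∀ i < k, g (z (i+1)) ≠ ⊤ := fun i _ =>
    EReal.ne_top_of_add_coe_le_add_coe (hz i q) hgq_top
  calc _ ≤ (((k : ℝ)⁻¹ * ∑ i ∈ Finset.range k, gap i : ℝ) : EReal) :=
        LagrH_average_sub_le A hfc hfp.1 hconv hgc hgp.1 hk0 hfx hgz hfp_top hgq_top v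
    _ ≤ ((e 0 / k : ℝ) : EReal) := by
      rw [EReal.coe_le_coe_iff, inv_mul_eq_div]
      gcongr

theorem stmt9 {H G : Type*}
    [NormedAddCommGroup H] [InnerProductSpace ℝ H] [CompleteSpace H]
    [NormedAddCommGroup G] [InnerProductSpace ℝ G] [CompleteSpace G]
    (f : H → EReal) (g : G → EReal)
    (hfp : ERealProper f) (hfc : ERealConvex f) (hfl : LowerSemicontinuous f)
    (hgp : ERealProper g) (hgc : ERealConvex g) (hgl : LowerSemicontinuous g)
    (h : H → ℝ) (h' : H → H) (L : ℝ) (hL : 0 < L)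
    (hconv : ConvexOn ℝ Set.univ h)
    (hgrad : ∀ p : H, HasGradientAt h (h' p) p)
    (hlip : LipschitzWith (Real.toNNReal L) h')
    (A : H →L[ℝ] G) (c : ℝ) (hc : 0 < c)
    (M₁ : ℕ → (H →L[ℝ] H)) (M₂ : ℕ → (G →L[ℝ] G))
    (hM₁ : ∀ k : ℕ, IsSplusOp (M₁ k)) (hM₂ : ∀ k : ℕ, IsSplusOp (M₂ k))
    (hM₁L : ∀ k : ℕ, IsSplusOp (M₁ k - L • ContinuousLinearMap.id ℝ H))
    (hM₁mono : ∀ k : ℕ, opLE (M₁ k) (M₁ (k+1)))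
    (hM₂mono : ∀ k : ℕ, opLE (M₂ k) (M₂ (k+1)))
    (x : ℕ → H) (z y : ℕ → G)
    (hx : ∀ k : ℕ, IsXUpdateGrad f h' A c (M₁ k) (x k) (z k) (y k) (x (k+1)))
    (hz : ∀ k : ℕ, IsZUpdate g c (M₂ k) (A (x (k+1))) (z k) (y k) (z (k+1)))
    (hy : ∀ k : ℕ, y (k+1) = y k + c • (A (x (k+1)) - z (k+1))) :
    ∀ k : ℕ, 1 ≤ k → ∀ (p : H) (q v : G),
      LagrH f h g A ((k : ℝ)⁻¹ • ∑ i ∈ Finset.range k, x (i+1))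
          ((k : ℝ)⁻¹ • ∑ i ∈ Finset.range k, z (i+1)) v
        - LagrH f h g A p q ((k : ℝ)⁻¹ • ∑ i ∈ Finset.range k, y (i+1)) ≤
      ((((c/2) * ‖A p - z 0‖ ^ 2
          + (1/2) * (opSq (M₁ 0) (p - x 0) + opSq (M₂ 0) (q - z 0))
          + (1/(2*c)) * ‖v - y 0‖ ^ 2) / (k : ℝ) : ℝ) : EReal) :=
  stmt9_general f g hfp hfc hgp hgc h h' L hconv hgrad hlip A c hc M₁ M₂ hM₁ hM₂ hM₁L hM₁mono
    hM₂mono x z y hx hz hy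
end
end

section
/- Let S be a nonempty subset of a real Hilbert space H, (xᵏ)_{k≥0} a sequence in H, α > 0, and Wᵏ ∈ P_α(H) with Wᵏ ⪰ W^{k+1} for all k ≥ 0. Assume: (i) for all z ∈ S and all k ≥ 0, ‖x^{k+1} − z‖_{W^{k+1}} ≤ ‖xᵏ − z‖_{Wᵏ}; (ii) every weak sequential cluster point of (xᵏ)_{k≥0} belongs to S. Then (xᵏ)_{k≥0} converges weakly to an element of S. -/
open scoped InnerProductSpace
open Filter

noncomputable section

/-!
Fejér monotonicity in the metrics `W k` bounds `(x k)` and makes `opSq (W k) (x k - p)`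
convergent for every `p ∈ S`. The decreasing positive operators `W k` converge strongly to some
`L ⪰ α • Id`, so by polarization `⟪x k, L (q - p)⟫` converges for `p, q ∈ S`; if `p` and `q` are
weak cluster points this gives `⟪L (q - p), q - p⟫ = 0`, hence `p = q`. A bounded sequence
(weakly sequentially compact by Banach–Alaoglu) with a single weak cluster point converges weakly.
-/

open Filter Topology

namespace ContinuousLinearMap

variable {E : Type*} [NormedAddCommGroup E] [InnerProductSpace ℝ E]

theorem IsPositive.inner_apply_sq_le {T : E →L[ℝ] E} (hT : T.IsPositive) (a b : E) :
    ⟪T a, b⟫_ℝ ^ 2 ≤ ⟪T a, a⟫_ℝ * ⟪T b, b⟫_ℝ := by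
  have hsymm (a b : E) : ⟪T b, a⟫_ℝ = ⟪T a, b⟫_ℝ :=
    (hT.inner_left_eq_inner_right b a).trans (real_inner_comm _ _)
  -- Cauchy–Schwarz for the semi-inner product `(a, b) ↦ ⟪T a, b⟫`.
  let c : PreInnerProductSpace.Core ℝ E :=
    { inner := fun a b => ⟪T a, b⟫_ℝ
      conj_inner_symm := hsymm
      re_inner_nonneg := hT.inner_nonneg_left
      add_left := fun a b c => by simp [inner_add_left]
      smul_left := fun a b r => by simp [real_inner_smul_left] }
  have h := @InnerProductSpace.Core.inner_mul_inner_self_le ℝ E _ _ _ c a b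
  change ‖⟪T a, b⟫_ℝ‖ * ‖⟪T b, a⟫_ℝ‖ ≤ ⟪T a, a⟫_ℝ * ⟪T b, b⟫_ℝ at h
  rwa [hsymm a b, ← sq, Real.norm_eq_abs, sq_abs] at h

theorem IsPositive.norm_apply_sq_le {T : E →L[ℝ] E} (hT : T.IsPositive) {C : ℝ}
    (hC : ∀ a, ⟪T a, a⟫_ℝ ≤ C * ‖a‖ ^ 2) (v : E) : ‖T v‖ ^ 2 ≤ C * ⟪T v, v⟫_ℝ := by
  have hCS := hT.inner_apply_sq_le v (T v)
  rw [real_inner_self_eq_norm_sq] at hCS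
  have hv := hT.inner_nonneg_left v
  rcases (sq_nonneg ‖T v‖).eq_or_lt with h0 | h0
  · rw [← h0]
    rcases le_or_gt 0 C with hC0 | hC0
    · positivity
    · nlinarith [hC v, mul_nonneg (sq_nonneg ‖v‖) (sq_nonneg C)]
  · nlinarith [hC (T v)]

theorem inner_apply_self_le_of_le {U V : E →L[ℝ] E} (h : U ≤ V) (a : E) :
    ⟪U a, a⟫_ℝ ≤ ⟪V a, a⟫_ℝ := by
  have := ((le_def U V).1 h).inner_nonneg_left a
  rwa [sub_apply, inner_sub_left, sub_nonneg] at this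

theorem cauchySeq_apply_of_antitone {W : ℕ → E →L[ℝ] E} (hW : Antitone W)
    (hpos : ∀ k, 0 ≤ W k) (v : E) : CauchySeq fun k => W k v := by
  set q : ℕ → ℝ := fun k => ⟪W k v, v⟫_ℝ
  set C := ‖W 0‖
  have hq_nonneg (k : ℕ) : 0 ≤ q k :=
    ((nonneg_iff_isPositive _).1 (hpos k)).inner_nonneg_left v
  have hq : Tendsto q atTop (𝓝 (⨅ k, q k)) :=
    tendsto_atTop_ciInf (fun k m hkm => inner_apply_self_le_of_le (hW hkm) v)
      ⟨0, Set.forall_mem_range.2 hq_nonneg⟩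
  -- For `n ≤ m`, `‖(W n - W m) v‖² ≤ ‖W 0‖ ⟪(W n - W m) v, v⟫ = ‖W 0‖ (q n - q m)`.
  refine cauchySeq_of_le_tendsto_0' (fun n => √(C * (q n - ⨅ k, q k))) (fun n m hnm => ?_) ?_
  · have hT := (le_def _ _).1 (hW hnm)
    have hbound (a : E) : ⟪(W n - W m) a, a⟫_ℝ ≤ C * ‖a‖ ^ 2 := by
      have hm := ((nonneg_iff_isPositive _).1 (hpos m)).inner_nonneg_left a
      calc ⟪(W n - W m) a, a⟫_ℝ ≤ ⟪W 0 a, a⟫_ℝ := by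
            rw [sub_apply, inner_sub_left]
            linarith [inner_apply_self_le_of_le (hW (Nat.zero_le n)) a]
        _ ≤ ‖W 0 a‖ * ‖a‖ := real_inner_le_norm _ _
        _ ≤ C * ‖a‖ * ‖a‖ := by gcongr; exact (W 0).le_opNorm a
        _ = C * ‖a‖ ^ 2 := by ring
    rw [dist_eq_norm, ← sub_apply]
    refine Real.le_sqrt_of_sq_le ((hT.norm_apply_sq_le hbound v).trans ?_)
    rw [sub_apply, inner_sub_left]
    gcongr
    exact ciInf_le ⟨0, Set.forall_mem_range.2 hq_nonneg⟩ m
  · simpa using ((hq.sub_const (⨅ k, q k)).const_mul C).sqrt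

end ContinuousLinearMap

section VariableMetric

variable {E : Type*} [NormedAddCommGroup E] [InnerProductSpace ℝ E]

theorem IsSplusOp.isPositive {U : E →L[ℝ] E} (hU : IsSplusOp U) : U.IsPositive :=
  (U.isPositive_iff).2 ⟨hU.1, fun a => real_inner_comm a (U a) ▸ hU.2 a⟩

theorem le_of_opLE {U V : E →L[ℝ] E} (hU : (U : E →ₗ[ℝ] E).IsSymmetric)
    (hV : (V : E →ₗ[ℝ] E).IsSymmetric) (h : opLE U V) : V ≤ U := by
  refine ((U - V).isPositive_iff).2 ⟨?_, fun a => ?_⟩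
  · rw [ContinuousLinearMap.toLinearMap_sub]
    exact hU.sub hV
  · rw [sub_apply, inner_sub_left, real_inner_comm a, real_inner_comm a, sub_nonneg]
    exact h a

theorem opSq_sub_sub_opSq_sub {U : E →L[ℝ] E} (hU : (U : E →ₗ[ℝ] E).IsSymmetric) (a p q : E) :
    opSq U (a - p) - opSq U (a - q) = 2 * ⟪a, U (q - p)⟫_ℝ + opSq U p - opSq U q := by
  have hswap (b c : E) : ⟪b, U c⟫_ℝ = ⟪c, U b⟫_ℝ := (real_inner_comm _ _).trans (hU c b)
  simp only [opSq, map_sub, inner_sub_left, inner_sub_right]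
  rw [hswap p a, hswap q a]
  ring

theorem tendsto_inner_sub_inner_of_norm_le {x y : ℕ → E} {R : ℝ} (hx : ∀ k, ‖x k‖ ≤ R) {y₀ : E}
    (hy : Tendsto y atTop (𝓝 y₀)) :
    Tendsto (fun k => ⟪x k, y k⟫_ℝ - ⟪x k, y₀⟫_ℝ) atTop (𝓝 0) := by
  refine squeeze_zero_norm (a := fun k => R * ‖y k - y₀‖) (fun k => ?_) ?_
  · rw [← inner_sub_right]
    exact (norm_inner_le_norm _ _).trans (by gcongr; exact hx k)
  · simpa using (tendsto_iff_norm_sub_tendsto_zero.1 hy).const_mul R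

theorem eq_of_weakConv_comp_of_tendsto_opSq {x : ℕ → E} {R : ℝ} (hx : ∀ k, ‖x k‖ ≤ R)
    {W : ℕ → E →L[ℝ] E} (hW : ∀ k, (W k : E →ₗ[ℝ] E).IsSymmetric) {L : E → E}
    (hL : ∀ v, Tendsto (fun k => W k v) atTop (𝓝 (L v))) {α : ℝ} (hα : 0 < α)
    (hLα : ∀ v, α * ‖v‖ ^ 2 ≤ ⟪L v, v⟫_ℝ) {p q : E} {Dp Dq : ℝ}
    (hp : Tendsto (fun k => opSq (W k) (x k - p)) atTop (𝓝 Dp))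
    (hq : Tendsto (fun k => opSq (W k) (x k - q)) atTop (𝓝 Dq)) {φ ψ : ℕ → ℕ}
    (hφ : StrictMono φ) (hψ : StrictMono ψ) (hpφ : WeakConv (x ∘ φ) p)
    (hqψ : WeakConv (x ∘ ψ) q) : p = q := by
  set v := q - p
  have hopSq (a : E) : Tendsto (fun k => opSq (W k) a) atTop (𝓝 ⟪a, L a⟫_ℝ) :=
    tendsto_const_nhds.inner (hL a)
  set ℓ := (Dp - Dq - ⟪p, L p⟫_ℝ + ⟪q, L q⟫_ℝ) / 2
  have hWv : Tendsto (fun k => ⟪x k, W k v⟫_ℝ) atTop (𝓝 ℓ) := by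
    refine ((((hp.sub hq).sub (hopSq p)).add (hopSq q)).div_const 2).congr fun k => ?_
    rw [opSq_sub_sub_opSq_sub (hW k)]
    ring
  have hLv : Tendsto (fun k => ⟪x k, L v⟫_ℝ) atTop (𝓝 ℓ) := by
    simpa using hWv.sub (tendsto_inner_sub_inner_of_norm_le hx (hL v))
  have hpv : ⟪p, L v⟫_ℝ = ℓ := tendsto_nhds_unique (hpφ (L v)) (hLv.comp hφ.tendsto_atTop)
  have hqv : ⟪q, L v⟫_ℝ = ℓ := tendsto_nhds_unique (hqψ (L v)) (hLv.comp hψ.tendsto_atTop)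
  have hv : α * ‖v‖ ^ 2 ≤ 0 := by
    simpa [real_inner_comm, v, inner_sub_left, hpv, hqv] using hLα v
  have hv0 : v = 0 := by
    by_contra hne
    have : 0 < α * ‖v‖ ^ 2 := by have := norm_pos_iff.2 hne; positivity
    linarith
  exact (sub_eq_zero.1 hv0).symm

theorem norm_le_add_sqrt_of_opSq_le {U : E →L[ℝ] E} {α : ℝ} (hα : 0 < α)
    (hU : ∀ a, α * ‖a‖ ^ 2 ≤ ⟪a, U a⟫_ℝ) {a z : E} {C : ℝ} (h : opSq U (a - z) ≤ C) :
    ‖a‖ ≤ ‖z‖ + √(C / α) :=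
  calc ‖a‖ ≤ ‖z‖ + ‖a - z‖ := norm_le_insert' _ _
    _ ≤ ‖z‖ + √(C / α) := by
      gcongr
      exact Real.le_sqrt_of_sq_le ((le_div_iff₀' hα).2 ((hU _).trans h))

variable [CompleteSpace E]

theorem exists_weakConv_comp_of_norm_le {u : ℕ → E} {R : ℝ} (hu : ∀ k, ‖u k‖ ≤ R) :
    ∃ p : E, ∃ φ : ℕ → ℕ, StrictMono φ ∧ WeakConv (u ∘ φ) p := by
  -- Sequential Banach–Alaoglu in the separable closed span `K` of the sequence, identified with
  -- its dual by Riesz; the orthogonal projection onto `K` transfers the limit to all of `E`.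
  set K := (Submodule.span ℝ (Set.range u)).topologicalClosure
  have : CompleteSpace K := (Submodule.isClosed_topologicalClosure _).completeSpace_coe
  have : TopologicalSpace.SeparableSpace K := by
    have := (Set.countable_range u).isSeparable.span (R := ℝ) |>.closure
    rw [← Submodule.topologicalClosure_coe] at this
    exact this.separableSpace
  have hmem (k : ℕ) : u k ∈ K :=
    Submodule.le_topologicalClosure _ (Submodule.subset_span ⟨k, rfl⟩)
  let f : ℕ → WeakDual ℝ K := fun k =>
    StrongDual.toWeakDual (InnerProductSpace.toDual ℝ K ⟨u k, hmem k⟩)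
  have hf (k : ℕ) : f k ∈ WeakDual.toStrongDual ⁻¹' Metric.closedBall 0 R := by
    change dist (InnerProductSpace.toDual ℝ K ⟨u k, hmem k⟩) 0 ≤ R
    rw [dist_zero_right, LinearIsometryEquiv.norm_map]
    exact hu k
  obtain ⟨g, -, φ, hφ, hg⟩ := WeakDual.isSeqCompact_closedBall ℝ K 0 R hf
  refine ⟨(InnerProductSpace.toDual ℝ K).symm (WeakDual.toStrongDual g), φ, hφ, fun w => ?_⟩
  have := ((WeakDual.eval_continuous (K.orthogonalProjectionOnto w)).tendsto g).comp hg
  rw [← K.inner_orthogonalProjectionOnto_eq_of_mem_left, ← InnerProductSpace.toDual_apply_apply,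
    LinearIsometryEquiv.apply_symm_apply]
  simpa [f, Function.comp_def] using this

theorem weakConv_of_forall_weakConv_comp {u : ℕ → E} {R : ℝ} (hu : ∀ k, ‖u k‖ ≤ R) {p : E}
    (h : ∀ (φ : ℕ → ℕ) (q : E), StrictMono φ → WeakConv (u ∘ φ) q → q = p) :
    WeakConv u p := by
  intro w
  by_contra hw
  obtain ⟨s, hs, hfreq⟩ := not_tendsto_iff_exists_frequently_notMem.1 hw
  obtain ⟨ψ, hψ, hψs⟩ := extraction_of_frequently_atTop hfreq
  obtain ⟨q, φ, hφ, hq⟩ := exists_weakConv_comp_of_norm_le fun k => hu (ψ k)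
  obtain rfl := h (ψ ∘ φ) q (hψ.comp hφ) hq
  obtain ⟨k, hk⟩ := ((hq w).eventually hs).exists
  exact hψs (φ k) hk

end VariableMetric

theorem stmt11 {H : Type*}
    [NormedAddCommGroup H] [InnerProductSpace ℝ H] [CompleteSpace H]
    (S : Set H) (hS : S.Nonempty) (x : ℕ → H)
    (α : ℝ) (hα : 0 < α) (W : ℕ → (H →L[ℝ] H))
    (hW : ∀ k : ℕ, IsPalphaOp α (W k))
    (hWmono : ∀ k : ℕ, opLE (W k) (W (k+1)))
    (hFejer : ∀ p ∈ S, ∀ k : ℕ,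
      Real.sqrt (opSq (W (k+1)) (x (k+1) - p)) ≤ Real.sqrt (opSq (W k) (x k - p)))
    (hcluster : ∀ p : H, (∃ φ : ℕ → ℕ, StrictMono φ ∧ WeakConv (x ∘ φ) p) → p ∈ S) :
    ∃ p ∈ S, WeakConv x p := by
  obtain ⟨z, hz⟩ := hS
  have hpos (k : ℕ) : 0 ≤ W k :=
    (ContinuousLinearMap.nonneg_iff_isPositive _).2 (hW k).1.isPositive
  have hanti : Antitone W :=
    antitone_nat_of_succ_le fun k => le_of_opLE (hW k).1.1 (hW (k + 1)).1.1 (hWmono k)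
  have hfejer (p : H) (hp : p ∈ S) : Antitone fun k => opSq (W k) (x k - p) :=
    antitone_nat_of_succ_le fun k => (Real.sqrt_le_sqrt_iff ((hW k).1.2 _)).1 (hFejer p hp k)
  have hconv (p : H) (hp : p ∈ S) : Tendsto (fun k => opSq (W k) (x k - p)) atTop
      (𝓝 (⨅ k, opSq (W k) (x k - p))) :=
    tendsto_atTop_ciInf (hfejer p hp) ⟨0, Set.forall_mem_range.2 fun k => (hW k).1.2 _⟩
  have hbdd (k : ℕ) : ‖x k‖ ≤ ‖z‖ + √(opSq (W 0) (x 0 - z) / α) :=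
    norm_le_add_sqrt_of_opSq_le hα (hW k).2 (hfejer z hz (Nat.zero_le k))
  choose L hL using fun v =>
    cauchySeq_tendsto_of_complete (ContinuousLinearMap.cauchySeq_apply_of_antitone hanti hpos v)
  have hLα (v : H) : α * ‖v‖ ^ 2 ≤ ⟪L v, v⟫_ℝ :=
    ge_of_tendsto ((hL v).inner tendsto_const_nhds)
      (Eventually.of_forall fun k => real_inner_comm v (W k v) ▸ (hW k).2 v)
  obtain ⟨p, φ, hφ, hpφ⟩ := exists_weakConv_comp_of_norm_le hbdd
  have hpS := hcluster p ⟨φ, hφ, hpφ⟩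
  refine ⟨p, hpS, weakConv_of_forall_weakConv_comp hbdd fun ψ q hψ hqψ => ?_⟩
  exact (eq_of_weakConv_comp_of_tendsto_opSq hbdd (fun k => (hW k).1.1) hL hα hLα (hconv p hpS)
    (hconv q (hcluster q ⟨ψ, hψ, hqψ⟩)) hφ hψ hpφ hqψ).symm
end
end
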